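/- arXiv:1909.07837 — 3 statements merged into one kernel-verified Lean document; each statement's English description precedes it below -/
import Mathlib

section
/- Let C : [0,T] → ℝ solve the Riccati ODE dC/dt = -a - b·C - c·C² with terminal condition C(T) = 0, where a = (1-γ)/γ², c = σ_X²(ρ² + γ(1-ρ²)) > 0. If γ < 1 then a > 0 and C is strictly positive and strictly decreasing on [0,T); if γ > 1 then a < 0 and C is strictly negative and strictly increasing on [0,T). -/
/-!
The velocity `D = C'` of a solution of the autonomous equation `C' = F(C)` solves the linear
equation `D' = F'(C) D`, so by Grönwall, once `D` vanishes it stays zero. For the Riccati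
right-hand side `D(T) = F(0) = -a ≠ 0`, so by the intermediate value theorem `C'` has the sign
of `-a` on all of `[0,T]`; thus `C` is strictly monotone and, being `0` at `T`, of the opposite
sign before `T`.
-/

open Set

theorem eqOn_zero_of_hasDerivWithinAt_smul_self {E : Type*} [NormedAddCommGroup E]
    [NormedSpace ℝ E] {f : ℝ → E} {g : ℝ → ℝ} {s T : ℝ} (hg : ContinuousOn g (Icc s T))
    (hf : ContinuousOn f (Icc s T))
    (hf' : ∀ t ∈ Ico s T, HasDerivWithinAt f (g t • f t) (Ici t) t) (hs : f s = 0) :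
    EqOn f 0 (Icc s T) := by
  obtain ⟨K, hK⟩ := isCompact_Icc.exists_bound_of_continuousOn hg
  refine eq_zero_of_abs_deriv_le_mul_abs_self_of_eq_zero_right (K := K) hf hf' hs fun t ht => ?_
  rw [norm_smul]
  exact mul_le_mul_of_nonneg_right (hK t (Ico_subset_Icc_self ht)) (norm_nonneg _)

theorem pos_of_hasDerivAt_mul_self {f g : ℝ → ℝ} {s T : ℝ} (hg : ContinuousOn g (Icc s T))
    (hf : ∀ t ∈ Icc s T, HasDerivAt f (g t * f t) t) (hT : 0 < f T) :
    ∀ t ∈ Icc s T, 0 < f t := by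
  have hcont : ContinuousOn f (Icc s T) := fun t ht => (hf t ht).continuousAt.continuousWithinAt
  intro t ht
  by_contra! hft
  have hsub : Icc t T ⊆ Icc s T := Icc_subset_Icc_left ht.1
  obtain ⟨u, hu, hfu⟩ := intermediate_value_Icc ht.2 (hcont.mono hsub) ⟨hft, hT.le⟩
  have hsub' : Icc u T ⊆ Icc s T := (Icc_subset_Icc_left hu.1).trans hsub
  have hzero := eqOn_zero_of_hasDerivWithinAt_smul_self (hg.mono hsub') (hcont.mono hsub')
    (fun x hx => (hf x (hsub' (Ico_subset_Icc_self hx))).hasDerivWithinAt) hfu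
  exact hT.ne' (hzero (right_mem_Icc.2 hu.2))

theorem neg_of_hasDerivAt_mul_self {f g : ℝ → ℝ} {s T : ℝ} (hg : ContinuousOn g (Icc s T))
    (hf : ∀ t ∈ Icc s T, HasDerivAt f (g t * f t) t) (hT : f T < 0) :
    ∀ t ∈ Icc s T, f t < 0 := by
  have := pos_of_hasDerivAt_mul_self (f := -f) hg
    (fun t ht => by simpa only [Pi.neg_apply, mul_neg] using (hf t ht).neg) (neg_pos.2 hT)
  simpa only [Pi.neg_apply, neg_pos] using this

section Autonomous

variable {F F' C : ℝ → ℝ} {s T : ℝ}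

theorem strictAntiOn_of_autonomous (hF : ∀ x, HasDerivAt F (F' x) x) (hF' : Continuous F')
    (hC : ∀ t ∈ Icc s T, HasDerivAt C (F (C t)) t) (hT : F (C T) < 0) :
    StrictAntiOn C (Icc s T) := by
  have hCcont : ContinuousOn C (Icc s T) :=
    fun t ht => (hC t ht).continuousAt.continuousWithinAt
  have hneg := neg_of_hasDerivAt_mul_self (hF'.comp_continuousOn hCcont)
    (fun t ht => (hF (C t)).comp t (hC t ht)) hT
  refine strictAntiOn_of_deriv_neg (convex_Icc s T) hCcont fun t ht => ?_
  rw [interior_Icc] at ht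
  rw [(hC t (Ioo_subset_Icc_self ht)).deriv]
  exact hneg t (Ioo_subset_Icc_self ht)

theorem strictMonoOn_of_autonomous (hF : ∀ x, HasDerivAt F (F' x) x) (hF' : Continuous F')
    (hC : ∀ t ∈ Icc s T, HasDerivAt C (F (C t)) t) (hT : 0 < F (C T)) :
    StrictMonoOn C (Icc s T) := by
  have hCcont : ContinuousOn C (Icc s T) :=
    fun t ht => (hC t ht).continuousAt.continuousWithinAt
  have hpos := pos_of_hasDerivAt_mul_self (hF'.comp_continuousOn hCcont)
    (fun t ht => (hF (C t)).comp t (hC t ht)) hT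
  refine strictMonoOn_of_deriv_pos (convex_Icc s T) hCcont fun t ht => ?_
  rw [interior_Icc] at ht
  rw [(hC t (Ioo_subset_Icc_self ht)).deriv]
  exact hpos t (Ioo_subset_Icc_self ht)

end Autonomous

theorem hasDerivAt_quadratic (a b c x : ℝ) :
    HasDerivAt (fun x => -a - b * x - c * x ^ 2) (-b - 2 * c * x) x := by
  refine ((((hasDerivAt_id x).const_mul b).const_sub (-a)).sub
    (((hasDerivAt_id x).pow 2).const_mul c)).congr_deriv ?_
  simp only [id, Nat.cast_ofNat]
  ring

theorem riccati_C_sign_monotone_general (lam sigX ρ γ T : ℝ) (hγ : 0 < γ)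
    (C : ℝ → ℝ)
    (hC : ∀ t ∈ Set.Icc 0 T, HasDerivAt C
      (-( (1 - γ) / γ ^ 2) - (2 * (-lam + (1 - γ) / γ * ρ * sigX)) * C t
        - (sigX ^ 2 * (ρ ^ 2 + γ * (1 - ρ ^ 2))) * (C t) ^ 2) t)
    (hCT : C T = 0) :
    (γ < 1 → (0 < (1 - γ) / γ ^ 2 ∧ (∀ t ∈ Set.Ico 0 T, 0 < C t) ∧
      StrictAntiOn C (Set.Ico 0 T))) ∧
    (1 < γ → ((1 - γ) / γ ^ 2 < 0 ∧ (∀ t ∈ Set.Ico 0 T, C t < 0) ∧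
      StrictMonoOn C (Set.Ico 0 T))) := by
  have hF := hasDerivAt_quadratic ((1 - γ) / γ ^ 2) (2 * (-lam + (1 - γ) / γ * ρ * sigX))
    (sigX ^ 2 * (ρ ^ 2 + γ * (1 - ρ ^ 2)))
  have hF' : Continuous fun x => -(2 * (-lam + (1 - γ) / γ * ρ * sigX))
    - 2 * (sigX ^ 2 * (ρ ^ 2 + γ * (1 - ρ ^ 2))) * x := by fun_prop
  have hTmem : ∀ t ∈ Ico 0 T, T ∈ Icc 0 T := fun t ht => ⟨ht.1.trans ht.2.le, le_rfl⟩
  constructor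
  · intro hγlt
    have ha : 0 < (1 - γ) / γ ^ 2 := by apply div_pos <;> nlinarith
    have hanti := strictAntiOn_of_autonomous hF hF' hC (by simpa [hCT] using ha)
    exact ⟨ha, fun t ht => hCT ▸ hanti (Ico_subset_Icc_self ht) (hTmem t ht) ht.2,
      hanti.mono Ico_subset_Icc_self⟩
  · intro hγgt
    have ha : (1 - γ) / γ ^ 2 < 0 := div_neg_of_neg_of_pos (by linarith) (by positivity)
    have hmono := strictMonoOn_of_autonomous hF hF' hC (by simpa [hCT] using ha)
    exact ⟨ha, fun t ht => hCT ▸ hmono (Ico_subset_Icc_self ht) (hTmem t ht) ht.2,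
      hmono.mono Ico_subset_Icc_self⟩

/-- Sign and monotonicity of the Riccati solution C with C' = -a - bC - cC², C(T) = 0:
if γ < 1 then a > 0 and C is strictly positive and strictly decreasing on [0,T);
if γ > 1 then a < 0 and C is strictly negative and strictly increasing on [0,T). -/
theorem riccati_C_sign_monotone (lam sigX ρ γ T : ℝ) (hlam : 0 < lam) (hsig : 0 < sigX)
    (hρ : ρ ∈ Set.Icc (-1 : ℝ) 1) (hγ : 0 < γ) (hγ1 : γ ≠ 1) (hT : 0 < T)
    (C : ℝ → ℝ)
    (hC : ∀ t ∈ Set.Icc 0 T, HasDerivAt C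
      (-( (1 - γ) / γ ^ 2) - (2 * (-lam + (1 - γ) / γ * ρ * sigX)) * C t
        - (sigX ^ 2 * (ρ ^ 2 + γ * (1 - ρ ^ 2))) * (C t) ^ 2) t)
    (hCT : C T = 0) :
    (γ < 1 → (0 < (1 - γ) / γ ^ 2 ∧ (∀ t ∈ Set.Ico 0 T, 0 < C t) ∧
      StrictAntiOn C (Set.Ico 0 T))) ∧
    (1 < γ → ((1 - γ) / γ ^ 2 < 0 ∧ (∀ t ∈ Set.Ico 0 T, C t < 0) ∧
      StrictMonoOn C (Set.Ico 0 T))) :=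
  riccati_C_sign_monotone_general lam sigX ρ γ T hγ C hC hCT
end

section
/- For a CRRA investor with γ ≠ 1, γ > 0, the value of initial information V^I = 1 - (√Q₀ · exp(γ(Ã₀(R₀) - Ã₀(0)) - γ²B₀²R₀/(2Q₀)))^{1/(1-γ)}, obtained by solving w^{1-γ}exp(γ(Ã₀(R₀) + Q₀⁻¹B₀π₀ + ½Q₀⁻¹C₀π₀²)) = (w-Δw)^{1-γ}·Q₀^{-1/2}·exp(γÃ₀(0) + (γ/(2Q₀))(γB₀²R₀ + 2B₀π₀ + C₀π₀²)) for Δw = w·V^I, does not depend on π₀. -/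
/-- Closed form of the value of initial information: Δw = w·Vᴵ with
Vᴵ = 1 - (√Q₀ exp(γ(Ã₀(R₀)-Ã₀(0)) - γ²B₀²R₀/(2Q₀)))^{1/(1-γ)} solves the
indifference equation for every π₀, so Vᴵ does not depend on π₀. -/
theorem value_initial_information_closed_form (γ w Q₀ B₀ C₀ R₀ At1 At0 : ℝ)
    (hγ : 0 < γ) (hγ1 : γ ≠ 1) (hw : 0 < w) (hQ : 0 < Q₀) :
    ∀ π₀ : ℝ,
      w ^ (1 - γ) * Real.exp (γ * (At1 + Q₀⁻¹ * B₀ * π₀ + Q₀⁻¹ * C₀ * π₀ ^ 2 / 2))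
      = (w - w * (1 - (Real.sqrt Q₀
            * Real.exp (γ * (At1 - At0) - γ ^ 2 * B₀ ^ 2 * R₀ / (2 * Q₀)))
            ^ ((1 : ℝ) / (1 - γ)))) ^ (1 - γ)
        * (Real.sqrt Q₀)⁻¹
        * Real.exp (γ * At0
            + γ / (2 * Q₀) * (γ * B₀ ^ 2 * R₀ + 2 * B₀ * π₀ + C₀ * π₀ ^ 2)) := by
  intro π₀
  have hs : 0 < Real.sqrt Q₀ := Real.sqrt_pos.mpr hQ
  set A : ℝ := γ * (At1 - At0) - γ ^ 2 * B₀ ^ 2 * R₀ / (2 * Q₀) with hA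
  set K : ℝ := Real.sqrt Q₀ * Real.exp A with hK
  have hKpos : 0 < K := mul_pos hs (Real.exp_pos A)
  have h1γ : (1 : ℝ) - γ ≠ 0 := sub_ne_zero_of_ne (Ne.symm hγ1)
  have h1 : w - w * (1 - K ^ ((1 : ℝ) / (1 - γ))) = w * K ^ ((1 : ℝ) / (1 - γ)) := by
    ring
  rw [h1, Real.mul_rpow hw.le (Real.rpow_nonneg hKpos.le _), ← Real.rpow_mul hKpos.le,
    one_div_mul_cancel h1γ, Real.rpow_one]
  have h2 : w ^ (1 - γ) * K * (Real.sqrt Q₀)⁻¹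
      * Real.exp (γ * At0 + γ / (2 * Q₀) * (γ * B₀ ^ 2 * R₀ + 2 * B₀ * π₀ + C₀ * π₀ ^ 2))
      = w ^ (1 - γ)
        * Real.exp (A + (γ * At0 + γ / (2 * Q₀) * (γ * B₀ ^ 2 * R₀ + 2 * B₀ * π₀ + C₀ * π₀ ^ 2))) := by
    rw [hK]
    rw [show w ^ (1 - γ) * (Real.sqrt Q₀ * Real.exp A) * (Real.sqrt Q₀)⁻¹
        * Real.exp (γ * At0 + γ / (2 * Q₀) * (γ * B₀ ^ 2 * R₀ + 2 * B₀ * π₀ + C₀ * π₀ ^ 2))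
        = w ^ (1 - γ) * (Real.sqrt Q₀ * (Real.sqrt Q₀)⁻¹) * (Real.exp A
          * Real.exp (γ * At0 + γ / (2 * Q₀) * (γ * B₀ ^ 2 * R₀ + 2 * B₀ * π₀ + C₀ * π₀ ^ 2)))
        from by ring, mul_inv_cancel₀ hs.ne', mul_one, ← Real.exp_add]
  rw [h2]
  congr 1
  rw [hA]
  field_simp
  ring
end

section
/- Let F(Y,X,t) = Y^{1/γ}·exp(A(t) + B(t)X + ½C(t)X²) where A, B, C solve the Riccati system A' = ((γ-1)/γ)r - λX̄B - ½σ_X²C - ½cB², B' = -λX̄C - (b/2 + cC)B, C' = -a - bC - cC², with a = (1-γ)/γ², b = 2(-λ + ((1-γ)/γ)ρσ_X), c = σ_X²(ρ²+γ(1-ρ²)). Then F satisfies the PDE ½F_{YY}Y²(X² + ν*²(1-ρ²)) + F_{XY}Yσ_X(ρX + ν*(1-ρ²)) + ½F_{XX}σ_X² - F_X(σ_X(ρX + ν*(1-ρ²)) + λ(X - X̄)) + F_t - rF + rF_Y·Y = 0, where ν* = ν*(Y,X,t) = -σ_X F_X/(Y F_Y) = -γσ_X(B(t) + C(t)X). 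-/
/-!
Write `F = Y ^ p * exp (A + B X + C X² / 2)` with `p = 1 / γ`. Every partial derivative of `F`
appearing in the PDE is `F` times a polynomial in `X` (times `Y⁻¹` or `Y⁻²` for the `Y`-derivatives,
which the PDE multiplies back by `Y` or `Y²`). Dividing the PDE by `F` therefore leaves a quadratic
polynomial in `X`, and the Riccati system for `A`, `B`, `C` says exactly that its constant, linear
and quadratic coefficients vanish.
-/

open Real

section QuadraticExponent

variable (a b c : ℝ)

theorem hasDerivAt_exp_quadratic (x : ℝ) :
    HasDerivAt (fun x => exp (a + b * x + c * x ^ 2 / 2))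
      (exp (a + b * x + c * x ^ 2 / 2) * (b + c * x)) x := by
  have h : HasDerivAt (fun x => a + b * x + c * x ^ 2 / 2) (b + c * x) x := by
    refine ((((hasDerivAt_id' x).const_mul b).const_add a).add
      (((hasDerivAt_pow 2 x).const_mul c).div_const 2)).congr_deriv ?_
    push_cast
    ring
  exact h.exp

theorem deriv_exp_quadratic :
    deriv (fun x => exp (a + b * x + c * x ^ 2 / 2))
      = fun x => exp (a + b * x + c * x ^ 2 / 2) * (b + c * x) :=
  funext fun x => (hasDerivAt_exp_quadratic a b c x).deriv

theorem deriv_deriv_exp_quadratic (x : ℝ) :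
    deriv (deriv fun x => exp (a + b * x + c * x ^ 2 / 2)) x
      = exp (a + b * x + c * x ^ 2 / 2) * ((b + c * x) ^ 2 + c) := by
  rw [deriv_exp_quadratic]
  have hlin : HasDerivAt (fun x => b + c * x) c x := by
    simpa using ((hasDerivAt_id x).const_mul c).const_add b
  exact ((hasDerivAt_exp_quadratic a b c x).mul hlin).deriv.trans (by ring)

end QuadraticExponent

theorem hasDerivAt_exp_quadratic_coeffs {A B C : ℝ → ℝ} {a' b' c' t : ℝ} (x : ℝ)
    (hA : HasDerivAt A a' t) (hB : HasDerivAt B b' t) (hC : HasDerivAt C c' t) :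
    HasDerivAt (fun s => exp (A s + B s * x + C s * x ^ 2 / 2))
      (exp (A t + B t * x + C t * x ^ 2 / 2) * (a' + b' * x + c' * x ^ 2 / 2)) t :=
  ((hA.add (hB.mul_const x)).add ((hC.mul_const (x ^ 2)).div_const 2)).exp

-- The PDE divided by `F`, with `A'`, `B'`, `C'` replaced by the Riccati right-hand sides.
theorem riccati_residual_eq_zero (γ r lam Xbar sigX ρ X B C : ℝ) (hγ : γ ≠ 0) :
    let κ := sigX ^ 2 * (ρ ^ 2 + γ * (1 - ρ ^ 2))
    let β := 2 * (-lam + (1 - γ) / γ * ρ * sigX)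
    let D := B + C * X
    let ν := -γ * sigX * D
    let p := 1 / γ
    p * (p - 1) / 2 * (X ^ 2 + ν ^ 2 * (1 - ρ ^ 2))
      + p * D * sigX * (ρ * X + ν * (1 - ρ ^ 2))
      + (D ^ 2 + C) * sigX ^ 2 / 2
      - D * (sigX * (ρ * X + ν * (1 - ρ ^ 2)) + lam * (X - Xbar))
      + (((γ - 1) / γ * r - lam * Xbar * B - sigX ^ 2 * C / 2 - κ * B ^ 2 / 2)
        + (-lam * Xbar * C - (β / 2 + κ * C) * B) * X
        + (-((1 - γ) / γ ^ 2) - β * C - κ * C ^ 2) * X ^ 2 / 2)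
      - r + r * p = 0 := by
  intro κ β D ν p
  simp only [κ, β, D, ν, p]
  field_simp
  ring

theorem F_satisfies_pde_general (γ r lam Xbar sigX ρ T : ℝ)
    (hγ : 0 < γ)
    (A B C : ℝ → ℝ)
    (hA : ∀ t ∈ Set.Icc 0 T, HasDerivAt A
      ((γ - 1) / γ * r - lam * Xbar * B t - sigX ^ 2 * C t / 2
        - (sigX ^ 2 * (ρ ^ 2 + γ * (1 - ρ ^ 2))) * (B t) ^ 2 / 2) t)
    (hB : ∀ t ∈ Set.Icc 0 T, HasDerivAt B
      (-lam * Xbar * C t - ((2 * (-lam + (1 - γ) / γ * ρ * sigX)) / 2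
        + (sigX ^ 2 * (ρ ^ 2 + γ * (1 - ρ ^ 2))) * C t) * B t) t)
    (hC : ∀ t ∈ Set.Icc 0 T, HasDerivAt C
      (-((1 - γ) / γ ^ 2) - (2 * (-lam + (1 - γ) / γ * ρ * sigX)) * C t
        - (sigX ^ 2 * (ρ ^ 2 + γ * (1 - ρ ^ 2))) * (C t) ^ 2) t) :
    ∀ Y X t : ℝ, 0 < Y → t ∈ Set.Icc 0 T →
      let F : ℝ → ℝ → ℝ → ℝ := fun y x s =>
        y ^ ((1 : ℝ) / γ) * Real.exp (A s + B s * x + C s * x ^ 2 / 2)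
      let FY := deriv (fun y => F y X t) Y
      let FYY := deriv (deriv (fun y => F y X t)) Y
      let FX := deriv (fun x => F Y x t) X
      let FXX := deriv (deriv (fun x => F Y x t)) X
      let FXY := deriv (fun x => deriv (fun y => F y x t) Y) X
      let Ft := deriv (fun s => F Y X s) t
      let ν := -γ * sigX * (B t + C t * X)
      ν = -sigX * FX / (Y * FY) ∧
      (1 / 2) * FYY * Y ^ 2 * (X ^ 2 + ν ^ 2 * (1 - ρ ^ 2))
        + FXY * Y * sigX * (ρ * X + ν * (1 - ρ ^ 2))
        + (1 / 2) * FXX * sigX ^ 2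
        - FX * (sigX * (ρ * X + ν * (1 - ρ ^ 2)) + lam * (X - Xbar))
        + Ft - r * F Y X t + r * FY * Y = 0 := by
  intro Y X t hY ht
  have hFt := hasDerivAt_exp_quadratic_coeffs X (hA t ht) (hB t ht) (hC t ht)
  -- `deriv_deriv_exp_quadratic` has to fire before `deriv_exp_quadratic` rewrites the inner `deriv`.
  simp only [deriv_const_mul_field', deriv_mul_const_field', deriv_deriv_exp_quadratic]
  simp only [deriv_const_mul_field', deriv_rpow_const', deriv_exp_quadratic, hFt.deriv]
  have hY1 : Y ^ (1 / γ - 1) = Y ^ (1 / γ - 1 - 1) * Y := by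
    rw [← rpow_add_one hY.ne']; ring_nf
  have hY0 : Y ^ (1 / γ) = Y ^ (1 / γ - 1 - 1) * Y ^ 2 := by
    rw [pow_two, ← mul_assoc, ← hY1, ← rpow_add_one hY.ne']; ring_nf
  rw [hY0, hY1]
  set P := Y ^ (1 / γ - 1 - 1)
  set E := exp (A t + B t * X + C t * X ^ 2 / 2)
  have hP0 : P ≠ 0 := (rpow_pos_of_pos hY _).ne'
  have hE0 : E ≠ 0 := (exp_pos _).ne'
  constructor
  · field_simp
  · linear_combination (P * Y ^ 2 * E) *
      riccati_residual_eq_zero γ r lam Xbar sigX ρ X (B t) (C t) hγ.ne'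

/-- The candidate value function F(Y,X,t) = Y^{1/γ} exp(A(t) + B(t)X + ½C(t)X²),
with A, B, C solving the full-information Riccati system, satisfies the
Hamilton–Jacobi PDE of the verification theorem with penalty
ν* = -σX F_X/(Y F_Y) = -γσX(B(t) + C(t)X). -/
theorem F_satisfies_pde (γ r lam Xbar sigX ρ T : ℝ)
    (hγ : 0 < γ) (hγ1 : γ ≠ 1) (hr : 0 ≤ r) (hlam : 0 < lam) (hsig : 0 < sigX)
    (hρ : ρ ∈ Set.Icc (-1 : ℝ) 1)
    (A B C : ℝ → ℝ)
    (hA : ∀ t ∈ Set.Icc 0 T, HasDerivAt A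
      ((γ - 1) / γ * r - lam * Xbar * B t - sigX ^ 2 * C t / 2
        - (sigX ^ 2 * (ρ ^ 2 + γ * (1 - ρ ^ 2))) * (B t) ^ 2 / 2) t)
    (hB : ∀ t ∈ Set.Icc 0 T, HasDerivAt B
      (-lam * Xbar * C t - ((2 * (-lam + (1 - γ) / γ * ρ * sigX)) / 2
        + (sigX ^ 2 * (ρ ^ 2 + γ * (1 - ρ ^ 2))) * C t) * B t) t)
    (hC : ∀ t ∈ Set.Icc 0 T, HasDerivAt C
      (-((1 - γ) / γ ^ 2) - (2 * (-lam + (1 - γ) / γ * ρ * sigX)) * C t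
        - (sigX ^ 2 * (ρ ^ 2 + γ * (1 - ρ ^ 2))) * (C t) ^ 2) t) :
    ∀ Y X t : ℝ, 0 < Y → t ∈ Set.Icc 0 T →
      let F : ℝ → ℝ → ℝ → ℝ := fun y x s =>
        y ^ ((1 : ℝ) / γ) * Real.exp (A s + B s * x + C s * x ^ 2 / 2)
      let FY := deriv (fun y => F y X t) Y
      let FYY := deriv (deriv (fun y => F y X t)) Y
      let FX := deriv (fun x => F Y x t) X
      let FXX := deriv (deriv (fun x => F Y x t)) X
      let FXY := deriv (fun x => deriv (fun y => F y x t) Y) X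
      let Ft := deriv (fun s => F Y X s) t
      let ν := -γ * sigX * (B t + C t * X)
      ν = -sigX * FX / (Y * FY) ∧
      (1 / 2) * FYY * Y ^ 2 * (X ^ 2 + ν ^ 2 * (1 - ρ ^ 2))
        + FXY * Y * sigX * (ρ * X + ν * (1 - ρ ^ 2))
        + (1 / 2) * FXX * sigX ^ 2
        - FX * (sigX * (ρ * X + ν * (1 - ρ ^ 2)) + lam * (X - Xbar))
        + Ft - r * F Y X t + r * FY * Y = 0 :=
  F_satisfies_pde_general γ r lam Xbar sigX ρ T hγ A B C hA hB hC
end
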